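/- arXiv:1609.00069 — 5 statements merged into one kernel-verified Lean document; each statement's English description precedes it below -/
import Mathlib

section
/- For all positive integers n and k, the rainbow Turán number of the matching with k edges satisfies ex*(n, M_k) ≤ n(k−1) + (k−1)(4k−3). In particular, ex*(n, M_k) = n(k−1) + O(k²). -/
open SimpleGraph Finset

/-- `c` is a proper edge-coloring of `G`: distinct edges sharing a vertex get distinct colors. -/
def IsProperEdgeColoring {V β : Type*} (G : SimpleGraph V) (c : Sym2 V → β) : Prop :=
  ∀ ⦃e₁ e₂ : Sym2 V⦄, e₁ ∈ G.edgeSet → e₂ ∈ G.edgeSet → e₁ ≠ e₂ →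
    (∃ v, v ∈ e₁ ∧ v ∈ e₂) → c e₁ ≠ c e₂

/-- `G` contains a copy of `F` (as a subgraph). -/
def Contains {α V : Type*} (F : SimpleGraph α) (G : SimpleGraph V) : Prop :=
  ∃ f : α ↪ V, ∀ ⦃a b⦄, F.Adj a b → G.Adj (f a) (f b)

/-- `G`, edge-colored by `c`, contains a rainbow copy of `F`:
a copy of `F` all of whose edges receive distinct colors. -/
def HasRainbowCopy {α V β : Type*} (F : SimpleGraph α) (G : SimpleGraph V)
    (c : Sym2 V → β) : Prop :=
  ∃ f : α ↪ V, (∀ ⦃a b⦄, F.Adj a b → G.Adj (f a) (f b)) ∧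
    ∀ e₁ ∈ F.edgeSet, ∀ e₂ ∈ F.edgeSet, c (e₁.map ⇑f) = c (e₂.map ⇑f) → e₁ = e₂

/-- The set of edge-counts of `n`-vertex graphs admitting a proper edge-coloring
with no rainbow copy of `F`; its greatest element is the rainbow Turán number `ex*(n,F)`. -/
def rainbowExSet (n : ℕ) {α : Type*} (F : SimpleGraph α) : Set ℕ :=
  {m | ∃ (G : SimpleGraph (Fin n)) (c : Sym2 (Fin n) → ℕ),
    IsProperEdgeColoring G c ∧ ¬ HasRainbowCopy F G c ∧ G.edgeSet.ncard = m}

/-- The set of edge-counts of `n`-vertex `F`-free graphs; its greatest element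
is the Turán number `ex(n,F)`. -/
def exSet (n : ℕ) {α : Type*} (F : SimpleGraph α) : Set ℕ :=
  {m | ∃ G : SimpleGraph (Fin n), ¬ Contains F G ∧ G.edgeSet.ncard = m}

/-- The matching `M_k` with `k` edges: vertices `2i` and `2i+1` are matched. -/
def matchingGraph (k : ℕ) : SimpleGraph (Fin (2 * k)) :=
  SimpleGraph.fromRel (fun a b => (a : ℕ) / 2 = (b : ℕ) / 2)

/-- The forest of `k` vertex-disjoint stars where the `i`-th star has `a i` edges
(the vertex `⟨i, 0⟩` being the center of the `i`-th star). -/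
def starForest {k : ℕ} (a : Fin k → ℕ) : SimpleGraph (Σ i, Fin (a i + 1)) :=
  SimpleGraph.fromRel (fun x y => x.1 = y.1 ∧ (x.2 : ℕ) = 0)

/-!
Let `G` carry a proper colouring without a rainbow matching of `k + 1` edges; we show
`|E(G)| ≤ k (n + 4k + 1)` by induction on `k`. If some vertex `v` has degree `> 3k`, then
`G - v` has no rainbow `k`-matching: such a matching covers only `2k` neighbours of `v` and,
the colouring being proper, blocks the colours of only `k` edges at `v`, so some edge at `v`
would extend it. Deleting `v` loses fewer than `n` edges. Otherwise all degrees are `≤ 3k`;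
fix a maximum rainbow matching `M` (`|M| = r ≤ k`) on the vertex set `U`. By maximality each
edge outside `U` repeats one of the `r` colours of `M`, so the graph outside `U` has maximum
degree `≤ r` and at most `nr/2` edges, while at most `2r · 3k` edges meet `U`.
-/

variable {V β : Type*}

lemma Finset.card_biUnion_sym2_toFinset_le [DecidableEq V] (M : Finset (Sym2 V)) :
    #(M.biUnion Sym2.toFinset) ≤ 2 * #M := by
  rw [mul_comm]
  refine card_biUnion_le_card_mul _ _ _ fun e _ ↦ ?_
  rw [Sym2.card_toFinset]
  split <;> omega

section ProperEdgeColoring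

variable {G G' : SimpleGraph V} {c : Sym2 V → β}

lemma IsProperEdgeColoring.mono (hc : IsProperEdgeColoring G c) (h : G' ≤ G) :
    IsProperEdgeColoring G' c :=
  fun _ _ he₁ he₂ ↦ hc (edgeSet_mono h he₁) (edgeSet_mono h he₂)

lemma IsProperEdgeColoring.card_filter_neighborFinset_le [DecidableEq β]
    (hc : IsProperEdgeColoring G c) (v : V) [Fintype (G.neighborSet v)] (S : Finset β) :
    #{x ∈ G.neighborFinset v | c s(v, x) ∈ S} ≤ #S := by
  refine card_le_card_of_injOn (fun x ↦ c s(v, x)) (fun x hx ↦ (mem_filter.1 hx).2) ?_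
  intro x hx y hy hxy
  by_contra hne
  simp only [coe_filter, mem_neighborFinset, Set.mem_ofPred_eq] at hx hy
  exact hc hx.1 hy.1 (fun h ↦ hne (Sym2.congr_right.1 h))
    ⟨v, Sym2.mem_mk_left _ _, Sym2.mem_mk_left _ _⟩ hxy

end ProperEdgeColoring

structure IsRainbowMatching (G : SimpleGraph V) (c : Sym2 V → β) (M : Finset (Sym2 V)) :
    Prop where
  subset_edgeSet : ↑M ⊆ G.edgeSet
  disjoint : ∀ e ∈ M, ∀ e' ∈ M, e ≠ e' → ∀ v ∈ e, v ∉ e'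
  injOn : Set.InjOn c M

namespace IsRainbowMatching

variable {G G' : SimpleGraph V} {c : Sym2 V → β} {M M' : Finset (Sym2 V)}

lemma empty : IsRainbowMatching G c ∅ :=
  ⟨by simp, by simp, by simp⟩

lemma singleton {e : Sym2 V} (he : e ∈ G.edgeSet) : IsRainbowMatching G c {e} :=
  ⟨by simpa using he, by simp, by simp⟩

lemma mono (hM : IsRainbowMatching G' c M) (h : G' ≤ G) : IsRainbowMatching G c M :=
  ⟨hM.subset_edgeSet.trans (edgeSet_mono h), hM.disjoint, hM.injOn⟩

lemma anti (hM : IsRainbowMatching G c M) (h : M' ⊆ M) : IsRainbowMatching G c M' :=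
  ⟨(coe_subset.2 h).trans hM.subset_edgeSet,
    fun e he e' he' ↦ hM.disjoint e (h he) e' (h he'), hM.injOn.mono (coe_subset.2 h)⟩

lemma insert [DecidableEq V] [DecidableEq β] (hM : IsRainbowMatching G c M) {a b : V}
    (hab : G.Adj a b) (ha : a ∉ M.biUnion Sym2.toFinset) (hb : b ∉ M.biUnion Sym2.toFinset)
    (hc : c s(a, b) ∉ M.image c) : IsRainbowMatching G c (insert s(a, b) M) := by
  simp only [mem_biUnion, Sym2.mem_toFinset, not_exists, not_and, mem_image] at ha hb hc
  refine ⟨?_, ?_, ?_⟩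
  · simpa [Set.insert_subset_iff] using ⟨hab, hM.subset_edgeSet⟩
  · intro e he e' he' hne v hv hv'
    rw [mem_insert] at he he'
    rcases he with rfl | he <;> rcases he' with rfl | he'
    · exact hne rfl
    · rcases Sym2.mem_iff.1 hv with rfl | rfl
      exacts [ha e' he' hv', hb e' he' hv']
    · rcases Sym2.mem_iff.1 hv' with rfl | rfl
      exacts [ha e he hv, hb e he hv]
    · exact hM.disjoint e he e' he' hne v hv hv'
  · rw [coe_insert, Set.injOn_insert fun h ↦ hc _ h rfl]
    exact ⟨hM.injOn, fun ⟨e, he, hce⟩ ↦ hc e he hce⟩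

lemma exists_card_eq_succ [DecidableEq V] (hc : IsProperEdgeColoring G c)
    (hM : IsRainbowMatching G c M) {v : V} [Fintype (G.neighborSet v)]
    (hv : v ∉ M.biUnion Sym2.toFinset) (hdeg : 3 * #M < G.degree v) :
    ∃ M', IsRainbowMatching G c M' ∧ #M' = #M + 1 := by
  classical
  set bad := M.biUnion Sym2.toFinset ∪ {x ∈ G.neighborFinset v | c s(v, x) ∈ M.image c}
  have hbad : #bad ≤ 3 * #M :=
    calc #bad ≤ 2 * #M + #(M.image c) :=
          (card_union_le _ _).trans <| add_le_add (card_biUnion_sym2_toFinset_le M)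
            (hc.card_filter_neighborFinset_le v _)
      _ ≤ 3 * #M := by linarith [card_image_le (s := M) (f := c)]
  obtain ⟨x, hx, hxbad⟩ := exists_mem_notMem_of_card_lt_card
    (hbad.trans_lt (hdeg.trans_eq (G.card_neighborFinset_eq_degree v).symm))
  rw [mem_neighborFinset] at hx
  simp only [bad, mem_union, mem_filter, mem_neighborFinset, not_or, not_and] at hxbad
  have hcol := hxbad.2 hx
  exact ⟨_, hM.insert hx hv hxbad.1 hcol,
    card_insert_of_notMem fun h ↦ hcol (mem_image_of_mem c h)⟩

lemma card_le_of_deleteIncidenceSet {k : ℕ} {v : V} [Fintype (G.neighborSet v)]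
    (hc : IsProperEdgeColoring G c) (hk : ∀ M, IsRainbowMatching G c M → #M ≤ k + 1)
    (hv : 3 * (k + 1) < G.degree v) (hM : IsRainbowMatching (G.deleteIncidenceSet v) c M) :
    #M ≤ k := by
  classical
  have hvM : v ∉ M.biUnion Sym2.toFinset := by
    simp only [mem_biUnion, Sym2.mem_toFinset, not_exists, not_and]
    intro e he hve
    have he' := G.edgeSet_deleteIncidenceSet v ▸ hM.subset_edgeSet he
    exact he'.2 ⟨he'.1, hve⟩
  have hMG := hM.mono (G.deleteIncidenceSet_le v)
  obtain ⟨M', hM', hcard⟩ := hMG.exists_card_eq_succ hc hvM (by linarith [hk M hMG])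
  linarith [hk M' hM']

end IsRainbowMatching

section MatchingGraph

variable {k : ℕ}

def matchingIndex (a : Fin (2 * k)) : Fin k := ⟨a / 2, by omega⟩

lemma matchingGraph_adj {a b : Fin (2 * k)} :
    (matchingGraph k).Adj a b ↔ a ≠ b ∧ matchingIndex a = matchingIndex b := by
  simp [matchingGraph, matchingIndex, Fin.ext_iff, eq_comm]

lemma matchingGraph_edge_eq_of_matchingIndex_eq {a b a' b' : Fin (2 * k)}
    (hab : (matchingGraph k).Adj a b) (ha'b' : (matchingGraph k).Adj a' b')
    (h : matchingIndex a = matchingIndex a') : s(a, b) = s(a', b') := by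
  simp only [matchingGraph_adj, matchingIndex, ne_eq, Fin.ext_iff] at hab ha'b' h
  simp only [Sym2.eq_iff, Fin.ext_iff]
  omega

noncomputable def matchingEmbeddingFun (e : Fin k → Sym2 V) (a : Fin (2 * k)) : V :=
  if (a : ℕ) % 2 = 0 then (e (matchingIndex a)).out.1 else (e (matchingIndex a)).out.2

variable (e : Fin k → Sym2 V)

lemma matchingEmbeddingFun_mem (a : Fin (2 * k)) :
    matchingEmbeddingFun e a ∈ e (matchingIndex a) := by
  unfold matchingEmbeddingFun
  split
  exacts [Sym2.out_fst_mem _, Sym2.out_snd_mem _]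

lemma mk_matchingEmbeddingFun {a b : Fin (2 * k)} (hab : (matchingGraph k).Adj a b) :
    s(matchingEmbeddingFun e a, matchingEmbeddingFun e b) = e (matchingIndex a) := by
  obtain ⟨hne, hidx⟩ := matchingGraph_adj.1 hab
  have hval : (a : ℕ) ≠ b := Fin.val_ne_of_ne hne
  have hdiv : (a : ℕ) / 2 = b / 2 := congrArg Fin.val hidx
  unfold matchingEmbeddingFun
  rw [← hidx]
  split_ifs
  · omega
  · exact Quot.out_eq _
  · exact Sym2.eq_swap.trans (Quot.out_eq _)
  · omega

end MatchingGraph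

namespace IsRainbowMatching

variable {G : SimpleGraph V} {c : Sym2 V → β} {M : Finset (Sym2 V)}

lemma hasRainbowCopy (hM : IsRainbowMatching G c M) : HasRainbowCopy (matchingGraph #M) G c := by
  set e : Fin #M → Sym2 V := fun i ↦ M.equivFin.symm i
  have he_mem (i : Fin #M) : e i ∈ M := (M.equivFin.symm i).2
  have he_inj : Function.Injective e := Subtype.val_injective.comp M.equivFin.symm.injective
  have hf_inj : Function.Injective (matchingEmbeddingFun e) := by
    intro a b hab
    by_contra hne
    by_cases hidx : matchingIndex a = matchingIndex b
    · have hdiag := mk_matchingEmbeddingFun e (matchingGraph_adj.2 ⟨hne, hidx⟩)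
      rw [hab] at hdiag
      exact G.not_isDiag_of_mem_edgeSet (hM.subset_edgeSet (he_mem _))
        (hdiag ▸ Sym2.mk_isDiag_iff.2 rfl)
    · exact hM.disjoint _ (he_mem _) _ (he_mem _) (he_inj.ne hidx) _
        (matchingEmbeddingFun_mem e a) (hab ▸ matchingEmbeddingFun_mem e b)
  refine ⟨⟨matchingEmbeddingFun e, hf_inj⟩, fun a b hab ↦ ?_, fun ε₁ hε₁ ε₂ hε₂ hcol ↦ ?_⟩
  · rw [← mem_edgeSet]
    exact mk_matchingEmbeddingFun e hab ▸ hM.subset_edgeSet (he_mem _)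
  · induction ε₁ using Sym2.ind
    induction ε₂ using Sym2.ind
    rw [mem_edgeSet] at hε₁ hε₂
    simp only [Function.Embedding.coeFn_mk, Sym2.map_mk, mk_matchingEmbeddingFun e hε₁,
      mk_matchingEmbeddingFun e hε₂] at hcol
    exact matchingGraph_edge_eq_of_matchingIndex_eq hε₁ hε₂
      (he_inj (hM.injOn (he_mem _) (he_mem _) hcol))

lemma card_le_of_not_hasRainbowCopy (hM : IsRainbowMatching G c M) {k : ℕ}
    (h : ¬ HasRainbowCopy (matchingGraph (k + 1)) G c) : #M ≤ k := by
  by_contra! hk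
  obtain ⟨M', hM', hcard⟩ := exists_subset_card_eq (Nat.succ_le_of_lt hk)
  have hcopy := (hM.anti hM').hasRainbowCopy
  rw [hcard] at hcopy
  exact h hcopy

end IsRainbowMatching

section Counting

variable [Fintype V] {G : SimpleGraph V} {c : Sym2 V → β}

lemma exists_isRainbowMatching_forall_card_le (G : SimpleGraph V) (c : Sym2 V → β) :
    ∃ M, IsRainbowMatching G c M ∧ ∀ M', IsRainbowMatching G c M' → #M' ≤ #M := by
  classical
  obtain ⟨M, hM, hmax⟩ := exists_max_image {M : Finset (Sym2 V) | IsRainbowMatching G c M} card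
    ⟨∅, by simpa using IsRainbowMatching.empty⟩
  exact ⟨M, (mem_filter.1 hM).2, fun M' hM' ↦ hmax M' (by simpa using hM')⟩

lemma card_edgeFinset_le_add_sum_degree [DecidableEq V] [DecidableRel G.Adj] (U : Finset V) :
    #G.edgeFinset ≤ #(G.deleteEdges {e | ∃ u ∈ U, u ∈ e}).edgeFinset + ∑ u ∈ U, G.degree u := by
  classical
  calc #G.edgeFinset
      ≤ #((G.deleteEdges {e | ∃ u ∈ U, u ∈ e}).edgeFinset ∪ U.biUnion (G.incidenceFinset ·)) := by
        refine card_le_card fun e he ↦ ?_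
        by_cases hU : ∃ u ∈ U, u ∈ e
        · obtain ⟨u, hu, hue⟩ := hU
          exact mem_union_right _
            (mem_biUnion.2 ⟨u, hu, (G.mem_incidenceFinset u e).2 ⟨mem_edgeFinset.1 he, hue⟩⟩)
        · push Not at hU
          exact mem_union_left _ (by simpa [edgeSet_deleteEdges] using ⟨mem_edgeFinset.1 he, hU⟩)
    _ ≤ _ := (card_union_le _ _).trans (Nat.add_le_add_left card_biUnion_le _)
    _ = _ := by
      congr 1
      exact sum_congr rfl fun u _ ↦ G.card_incidenceFinset_eq_degree u

lemma IsRainbowMatching.two_mul_card_edgeFinset_le [DecidableRel G.Adj] {M : Finset (Sym2 V)}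
    (hc : IsProperEdgeColoring G c) (hM : IsRainbowMatching G c M)
    (hmax : ∀ M', IsRainbowMatching G c M' → #M' ≤ #M) {D : ℕ} (hD : ∀ v, G.degree v ≤ D) :
    2 * #G.edgeFinset ≤ Fintype.card V * #M + 4 * #M * D := by
  classical
  set U := M.biUnion Sym2.toFinset
  set H := G.deleteEdges {e | ∃ u ∈ U, u ∈ e}
  have hH_degree (w : V) : H.degree w ≤ #M := by
    calc H.degree w ≤ #{x ∈ G.neighborFinset w | c s(w, x) ∈ M.image c} := by
          rw [← card_neighborFinset_eq_degree]
          refine card_le_card fun x hx ↦ ?_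
          simp only [H, mem_neighborFinset, deleteEdges_adj, Set.mem_ofPred_eq, Sym2.mem_iff] at hx
          refine mem_filter.2 ⟨(mem_neighborFinset _ _ _).2 hx.1, ?_⟩
          by_contra hcol
          have hw : w ∉ U := fun hw ↦ hx.2 ⟨w, hw, .inl rfl⟩
          have hx' : x ∉ U := fun hx' ↦ hx.2 ⟨x, hx', .inr rfl⟩
          have := hmax _ (hM.insert hx.1 hw hx' hcol)
          rw [card_insert_of_notMem fun h ↦ hcol (mem_image_of_mem c h)] at this
          omega
      _ ≤ #(M.image c) := hc.card_filter_neighborFinset_le w _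
      _ ≤ #M := card_image_le
  have hH : 2 * #H.edgeFinset ≤ Fintype.card V * #M := by
    rw [← sum_degrees_eq_twice_card_edges, ← smul_eq_mul, ← card_univ]
    exact sum_le_card_nsmul _ _ _ fun w _ ↦ hH_degree w
  have hU : ∑ u ∈ U, G.degree u ≤ 2 * #M * D :=
    (sum_le_card_nsmul _ _ _ fun u _ ↦ hD u).trans
      (Nat.mul_le_mul_right _ (card_biUnion_sym2_toFinset_le M))
  linarith [card_edgeFinset_le_add_sum_degree (G := G) U]

theorem card_edgeFinset_le_of_forall_isRainbowMatching_card_le (k : ℕ) (G : SimpleGraph V)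
    [DecidableRel G.Adj] (hc : IsProperEdgeColoring G c)
    (hk : ∀ M, IsRainbowMatching G c M → #M ≤ k) :
    #G.edgeFinset ≤ k * (Fintype.card V + 4 * k + 1) := by
  classical
  induction k generalizing G with
  | zero =>
    suffices G.edgeFinset = ∅ by simp [this]
    refine eq_empty_of_forall_notMem fun e he ↦ ?_
    simpa using hk {e} (.singleton (mem_edgeFinset.1 he))
  | succ k ih =>
    by_cases hdeg : ∃ v, 3 * (k + 1) < G.degree v
    · obtain ⟨v, hv⟩ := hdeg
      have hdel := ih (G.deleteIncidenceSet v) (hc.mono (G.deleteIncidenceSet_le v))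
        fun M hM ↦ hM.card_le_of_deleteIncidenceSet hc hk hv
      have hcard := G.card_edgeFinset_deleteIncidenceSet v
      have hdeg_lt := G.degree_lt_card_verts v
      have hsplit : #G.edgeFinset ≤ #(G.deleteIncidenceSet v).edgeFinset + G.degree v := by
        omega
      nlinarith
    · push Not at hdeg
      obtain ⟨M, hM, hmax⟩ := exists_isRainbowMatching_forall_card_le G c
      have hcount := hM.two_mul_card_edgeFinset_le hc hmax hdeg
      have hMk := hk M hM
      have hsum : 2 * #G.edgeFinset ≤ Fintype.card V * (3 * (k + 1)) := by
        rw [← sum_degrees_eq_twice_card_edges, ← smul_eq_mul, ← card_univ]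
        exact sum_le_card_nsmul _ _ _ fun v _ ↦ hdeg v
      -- `hcount` gives the bound when `n ≥ 4k + 2`, the handshake bound `hsum` when `n < 4k + 2`.
      rcases le_or_gt (4 * (k + 1)) (Fintype.card V + 2) with hn | hn
      · nlinarith
      · nlinarith

end Counting

theorem rainbowTuran_matching_weak_general (n k : ℕ) (hk : 0 < k) :
    ∀ m ∈ rainbowExSet n (matchingGraph k),
      m ≤ n * (k - 1) + (k - 1) * (4 * k - 3) := by
  rintro m ⟨G, c, hc, hfree, rfl⟩
  obtain ⟨k, rfl⟩ := Nat.exists_eq_add_one.2 hk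
  classical
  have h := card_edgeFinset_le_of_forall_isRainbowMatching_card_le k G hc
    fun M hM ↦ hM.card_le_of_not_hasRainbowCopy hfree
  rw [Fintype.card_fin] at h
  rw [← coe_edgeFinset, Set.ncard_coe_finset, Nat.add_sub_cancel,
    show 4 * (k + 1) - 3 = 4 * k + 1 by omega]
  linarith

/-- For all positive integers `n` and `k`, `ex*(n, M_k) ≤ n(k-1) + (k-1)(4k-3)`;
in particular `ex*(n, M_k) = n(k-1) + O(k²)`. -/
theorem rainbowTuran_matching_weak (n k : ℕ) (hn : 0 < n) (hk : 0 < k) :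
    ∀ m ∈ rainbowExSet n (matchingGraph k),
      m ≤ n * (k - 1) + (k - 1) * (4 * k - 3) :=
  rainbowTuran_matching_weak_general n k hk
end

section
/- Let G be a graph with minimum degree δ, and let c be a proper edge-coloring of G. Then G contains a rainbow path whose number of edges l satisfies 3l ≥ 2δ (that is, a rainbow path of length at least (2/3)δ). -/
open SimpleGraph Finset

/-!
Take a longest rainbow path `P` from `u` to `v`, of length `k`. At least `δ - k` neighbours `t`
of `v` lie off `P`, and by maximality each edge `vt` repeats a colour of `P`. Since the colouring
is proper, at least `δ - k` neighbours `z` of `u` see a colour `uz` missing from `P`; by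
maximality such a `z` lies on `P`. If `x` is the predecessor of `z` on `P`, rerouting `P` through
`uz` instead of `xz` and then appending `vt` gives a longer rainbow path unless `vt` and `xz` have
different colours. So the colours of the edges `vt` and of the edges `xz` are distinct colours of
`P`, and `2 (δ - k) ≤ k`.
-/

theorem IsProperEdgeColoring.injOn_neighborSet {V β : Type*} {G : SimpleGraph V}
    {c : Sym2 V → β} (hc : IsProperEdgeColoring G c) (v : V) :
    Set.InjOn (fun w => c s(v, w)) (G.neighborSet v) := by
  intro a ha b hb hab
  by_contra hne
  exact hc ha hb (fun h => hne (Sym2.congr_right.1 h))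
    ⟨v, Sym2.mem_mk_left v a, Sym2.mem_mk_left v b⟩ hab

theorem IsProperEdgeColoring.card_filter_color_mem_le {V β : Type*} [Fintype V]
    [DecidableEq β] {G : SimpleGraph V} [DecidableRel G.Adj] {c : Sym2 V → β}
    (hc : IsProperEdgeColoring G c) (v : V) (S : Finset β) :
    #{w ∈ G.neighborFinset v | c s(v, w) ∈ S} ≤ #S :=
  Finset.card_le_card_of_injOn _ (fun _ hw => (Finset.mem_filter.1 hw).2)
    ((hc.injOn_neighborSet v).mono fun _ hw => by simpa using (Finset.mem_filter.1 hw).1)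

namespace SimpleGraph.Walk

variable {V β : Type*} {G : SimpleGraph V} {c : Sym2 V → β} {u v x z t : V}

def IsRainbow (c : Sym2 V → β) (p : G.Walk u v) : Prop := (p.edges.map c).Nodup

theorem isRainbow_nil : (nil : G.Walk u u).IsRainbow c := List.nodup_nil

theorem IsRainbow.cons {p : G.Walk z v} (hp : p.IsRainbow c) (h : G.Adj u z)
    (hc : c s(u, z) ∉ p.edges.map c) : (cons h p).IsRainbow c :=
  List.nodup_cons.2 ⟨hc, hp⟩

theorem IsRainbow.concat {p : G.Walk u v} (hp : p.IsRainbow c) (h : G.Adj v t)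
    (hc : c s(v, t) ∉ p.edges.map c) : (p.concat h).IsRainbow c := by
  rw [IsRainbow, edges_concat, List.concat_eq_append, List.map_append, List.nodup_append_comm]
  exact List.nodup_cons.2 ⟨hc, hp⟩

theorem IsRainbow.injOn_darts {p : G.Walk u v} (hp : p.IsRainbow c) :
    Set.InjOn (fun d => c d.edge) {d | d ∈ p.darts} := fun _ hd₁ _ hd₂ =>
  List.inj_on_of_nodup_map (by simpa [IsRainbow, edges, Function.comp_def] using hp) hd₁ hd₂

theorem exists_eq_append_cons_of_mem_darts {p : G.Walk u v} {d : G.Dart} (hd : d ∈ p.darts) :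
    ∃ (q : G.Walk u d.fst) (r : G.Walk d.snd v), p = q.append (cons d.adj r) := by
  induction p with
  | nil => simp at hd
  | cons h p ih =>
    obtain rfl | hd := List.mem_cons.1 hd
    · exact ⟨nil, p, rfl⟩
    · obtain ⟨q, r, rfl⟩ := ih hd
      exact ⟨cons h q, r, rfl⟩

theorem IsPath.card_filter_mem_support_le [Fintype V] [DecidableEq V] [DecidableRel G.Adj]
    {P : G.Walk u v} (hP : P.IsPath) : #{w ∈ G.neighborFinset v | w ∈ P.support} ≤ P.length :=
  calc #{w ∈ G.neighborFinset v | w ∈ P.support}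
    _ ≤ #(P.support.toFinset.erase v) := Finset.card_le_card fun w hw => by
      obtain ⟨hvw, hw⟩ := Finset.mem_filter.1 hw
      exact Finset.mem_erase.2 ⟨(G.ne_of_adj ((G.mem_neighborFinset v w).1 hvw)).symm,
        List.mem_toFinset.2 hw⟩
    _ = P.length := by
      rw [Finset.card_erase_of_mem (List.mem_toFinset.2 P.end_mem_support),
        List.toFinset_card_of_nodup hP.support_nodup, length_support, Nat.add_sub_cancel]

section Rotation

/- The path `q.append (cons hxz r)` from `u` rerouted through the chord `uz`: it starts at `x`,
runs back along `q` to `u`, jumps to `z` and continues along `r`. -/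
variable (q : G.Walk u x) (hxz : G.Adj x z) (r : G.Walk z v) (huz : G.Adj u z)

theorem support_reverse_append_cons_perm :
    (q.reverse.append (cons huz r)).support.Perm (q.append (cons hxz r)).support := by
  simpa [support_append] using (List.reverse_perm _).append_right _

theorem edges_reverse_append_cons_perm :
    (s(x, z) :: (q.reverse.append (cons huz r)).edges).Perm
      (s(u, z) :: (q.append (cons hxz r)).edges) := by
  classical
  simp only [edges_append, edges_reverse, edges_cons]
  rw [List.perm_iff_count]
  intro e
  simp only [List.count_cons, List.count_append, List.count_reverse]
  omega

theorem IsPath.reverse_append_cons (hP : (q.append (cons hxz r)).IsPath) :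
    (q.reverse.append (cons huz r)).IsPath := by
  rw [isPath_def, (support_reverse_append_cons_perm q hxz r huz).nodup_iff]
  exact hP.support_nodup

theorem IsRainbow.reverse_append_cons_concat (hP : (q.append (Walk.cons hxz r)).IsRainbow c)
    (huz_c : c s(u, z) ∉ (q.append (Walk.cons hxz r)).edges.map c) (hvt : G.Adj v t)
    (hvt_c : c s(v, t) = c s(x, z)) :
    ((q.reverse.append (Walk.cons huz r)).concat hvt).IsRainbow c := by
  have hnodup : (c s(x, z) :: (q.reverse.append (Walk.cons huz r)).edges.map c).Nodup := by
    simpa using ((edges_reverse_append_cons_perm q hxz r huz).map c).nodup_iff.2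
      (List.nodup_cons.2 ⟨huz_c, hP⟩)
  obtain ⟨hxz_c, hR⟩ := List.nodup_cons.1 hnodup
  exact IsRainbow.concat hR hvt (hvt_c ▸ hxz_c)

end Rotation

theorem card_toFinset_map_edges_le [DecidableEq β] (p : G.Walk u v) (c : Sym2 V → β) :
    #(p.edges.map c).toFinset ≤ p.length := by
  simpa using List.toFinset_card_le (p.edges.map c)

variable (c) in
structure IsLongestRainbowPath (P : G.Walk u v) : Prop where
  isPath : P.IsPath
  isRainbow : P.IsRainbow c
  length_le : ∀ ⦃a b : V⦄ (q : G.Walk a b), q.IsPath → q.IsRainbow c →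
    q.length ≤ P.length

theorem exists_isLongestRainbowPath [Finite V] [Nonempty V] (G : SimpleGraph V)
    (c : Sym2 V → β) : ∃ (u v : V) (P : G.Walk u v), P.IsLongestRainbowPath c := by
  have := Fintype.ofFinite V
  set S : Set ℕ :=
    {n | ∃ (u v : V) (p : G.Walk u v), p.IsPath ∧ p.IsRainbow c ∧ p.length = n}
  have hS : BddAbove S := ⟨Fintype.card V, by
    rintro _ ⟨_, _, p, hp, -, rfl⟩
    exact hp.length_lt.le⟩
  obtain ⟨u, v, P, hP, hPc, hlen⟩ := Nat.sSup_mem (s := S)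
    ⟨0, Classical.arbitrary V, _, nil, IsPath.nil, isRainbow_nil, rfl⟩ hS
  exact ⟨u, v, P, hP, hPc, fun a b q hq hqc => hlen ▸ le_csSup hS ⟨a, b, q, hq, hqc, rfl⟩⟩

namespace IsLongestRainbowPath

variable {P : G.Walk u v}

theorem color_mem_of_adj_end (hP : P.IsLongestRainbowPath c) (hvt : G.Adj v t)
    (ht : t ∉ P.support) : c s(v, t) ∈ P.edges.map c := by
  by_contra hvt_c
  have := hP.length_le _ (hP.isPath.concat ht hvt) (hP.isRainbow.concat hvt hvt_c)
  simp at this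

theorem mem_support_of_adj_start (hP : P.IsLongestRainbowPath c) (huz : G.Adj u z)
    (huz_c : c s(u, z) ∉ P.edges.map c) : z ∈ P.support := by
  by_contra hz
  have := hP.length_le _ (hP.isPath.cons hz) (hP.isRainbow.cons huz.symm (Sym2.eq_swap ▸ huz_c))
  simp at this

theorem exists_mem_darts_snd_eq_of_adj_start (hP : P.IsLongestRainbowPath c) (huz : G.Adj u z)
    (huz_c : c s(u, z) ∉ P.edges.map c) : ∃ d ∈ P.darts, d.snd = z := by
  have hzP := hP.mem_support_of_adj_start huz huz_c
  rw [← P.cons_tail_support, List.mem_cons] at hzP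
  simpa [← map_snd_darts] using hzP.resolve_left huz.ne'

theorem color_ne_of_mem_darts (hP : P.IsLongestRainbowPath c) {d : G.Dart}
    (hd : d ∈ P.darts) (huz : G.Adj u d.snd) (huz_c : c s(u, d.snd) ∉ P.edges.map c)
    (hvt : G.Adj v t) (ht : t ∉ P.support) : c s(v, t) ≠ c d.edge := by
  intro hvt_c
  obtain ⟨q, r, rfl⟩ := exists_eq_append_cons_of_mem_darts hd
  have hR := hP.length_le _
    ((hP.isPath.reverse_append_cons q d.adj r huz).concat (by simpa [support_append] using ht) hvt)
    (hP.isRainbow.reverse_append_cons_concat q d.adj r huz huz_c hvt hvt_c)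
  simp at hR

theorem card_add_card_le [Fintype V] [DecidableEq V] [DecidableEq β] [DecidableRel G.Adj]
    (hP : P.IsLongestRainbowPath c) (hc : IsProperEdgeColoring G c) :
    #{t ∈ G.neighborFinset v | t ∉ P.support} +
      #{z ∈ G.neighborFinset u | c s(u, z) ∉ P.edges.map c} ≤ P.length := by
  set out := {t ∈ G.neighborFinset v | t ∉ P.support}
  set fresh := {z ∈ G.neighborFinset u | c s(u, z) ∉ P.edges.map c}
  set D := {d ∈ P.darts.toFinset | d.snd ∈ fresh}
  have hfresh : fresh ⊆ D.image (·.snd) := by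
    intro z hz
    obtain ⟨huz, huz_c⟩ := Finset.mem_filter.1 hz
    obtain ⟨d, hd, rfl⟩ :=
      hP.exists_mem_darts_snd_eq_of_adj_start ((G.mem_neighborFinset _ _).1 huz) huz_c
    exact Finset.mem_image.2 ⟨d, Finset.mem_filter.2 ⟨List.mem_toFinset.2 hd, hz⟩, rfl⟩
  set A := out.image (fun t => c s(v, t))
  set B := D.image (fun d => c d.edge)
  have hA : #A = #out := Finset.card_image_of_injOn <| (hc.injOn_neighborSet v).mono
    fun t ht => (G.mem_neighborFinset v t).1 (Finset.mem_filter.1 ht).1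
  have hB : #B = #D := Finset.card_image_of_injOn <| hP.isRainbow.injOn_darts.mono
    fun d hd => List.mem_toFinset.1 (Finset.mem_filter.1 hd).1
  have hAB : Disjoint A B := by
    simp only [Finset.disjoint_left, A, B, Finset.mem_image, not_exists, not_and]
    rintro _ ⟨t, ht, rfl⟩ d hd
    obtain ⟨hvt, ht⟩ := Finset.mem_filter.1 ht
    obtain ⟨hd, hz⟩ := Finset.mem_filter.1 hd
    obtain ⟨huz, huz_c⟩ := Finset.mem_filter.1 hz
    exact (hP.color_ne_of_mem_darts (List.mem_toFinset.1 hd) ((G.mem_neighborFinset _ _).1 huz)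
      huz_c ((G.mem_neighborFinset _ _).1 hvt) ht).symm
  have hsub : A ∪ B ⊆ (P.edges.map c).toFinset := by
    simp only [A, B, Finset.union_subset_iff, Finset.image_subset_iff, List.mem_toFinset]
    exact ⟨fun t ht => hP.color_mem_of_adj_end ((G.mem_neighborFinset _ _).1
      (Finset.mem_filter.1 ht).1) (Finset.mem_filter.1 ht).2,
      fun d hd => List.mem_map_of_mem (List.mem_map_of_mem
        (List.mem_toFinset.1 (Finset.mem_filter.1 hd).1))⟩
  calc #out + #fresh
    _ ≤ #A + #B := by
      rw [hA, hB]
      exact Nat.add_le_add_left ((Finset.card_le_card hfresh).trans Finset.card_image_le) _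
    _ = #(A ∪ B) := (Finset.card_union_of_disjoint hAB).symm
    _ ≤ P.length := (Finset.card_le_card hsub).trans (P.card_toFinset_map_edges_le c)

theorem two_mul_le_three_mul_length [Fintype V]
    (hP : P.IsLongestRainbowPath c) (hc : IsProperEdgeColoring G c) {δ : ℕ}
    (hδ : ∀ w, δ ≤ (G.neighborSet w).ncard) : 2 * δ ≤ 3 * P.length := by
  classical
  have hdeg (w : V) : δ ≤ #(G.neighborFinset w) := by
    simpa [Set.ncard_eq_toFinset_card', neighborFinset_def] using hδ w
  have hcolors := P.card_toFinset_map_edges_le c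
  have hv := Finset.card_filter_add_card_filter_not (s := G.neighborFinset v) (· ∈ P.support)
  have hu := Finset.card_filter_add_card_filter_not (s := G.neighborFinset u)
    (fun z => c s(u, z) ∈ (P.edges.map c).toFinset)
  have hon := hP.isPath.card_filter_mem_support_le
  have hcol := hc.card_filter_color_mem_le u (P.edges.map c).toFinset
  have hoff := hP.card_add_card_le hc
  simp only [List.mem_toFinset] at hu hcol
  have := hdeg u
  have := hdeg v
  omega

end IsLongestRainbowPath

end SimpleGraph.Walk

/-- Any proper edge-coloring of a graph with minimum degree `δ` contains a rainbow path
of length at least `(2/3)δ`, i.e. a rainbow path with `l` edges where `3l ≥ 2δ`. -/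
theorem rainbow_path_min_degree {V β : Type*} [Fintype V] [Nonempty V]
    (G : SimpleGraph V) (δ : ℕ) (hδ : ∀ v, δ ≤ (G.neighborSet v).ncard)
    (c : Sym2 V → β) (hc : IsProperEdgeColoring G c) :
    ∃ (u v : V) (p : G.Walk u v), p.IsPath ∧ (p.edges.map c).Nodup ∧
      2 * δ ≤ 3 * p.length := by
  obtain ⟨u, v, P, hP⟩ := Walk.exists_isLongestRainbowPath G c
  exact ⟨u, v, P, hP.isPath, hP.isRainbow, hP.two_mul_le_three_mul_length hc hδ⟩
end

section
/- There exists a proper edge-coloring of the complete graph K_4 on four vertices (using 3 colors) that contains no rainbow path with 3 edges. Consequently, for every r ≥ 1 there is a graph with minimum degree 3 (a disjoint union of r copies of K_4) admitting a proper edge-coloring whose longest rainbow path has only 2 edges, showing the constant 2/3 in the rainbow path theorem cannot be improved in general. -/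
open SimpleGraph Finset

/-!
Identify the vertices of `K₄` with `𝔽₂²` and color the edge `ab` by `a + b`, so that the color
classes are the three perfect matchings. If consecutive edges `ab, bx, xd` get three distinct
colors, these are the three nonzero vectors, whose sum is zero; hence `a = d`, and no path with
three edges is rainbow. The disjoint union of `r` copies of `K₄` maps homomorphically onto `K₄`,
injectively on each component; pulling the coloring back keeps it proper and sends paths to paths
carrying the same colors.
-/

variable {V W β γ : Type*} {G : SimpleGraph V} {H : SimpleGraph W}

theorem SimpleGraph.Walk.IsPath.map_of_injective_of_reachable (φ : G →g H)
    (hφ : ∀ ⦃a b⦄, G.Reachable a b → φ a = φ b → a = b) {u v : V} {p : G.Walk u v}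
    (hp : p.IsPath) : (p.map φ).IsPath := by
  classical
  rw [Walk.isPath_def, Walk.support_map]
  refine hp.support_nodup.map_on fun a ha b hb hab => hφ ?_ hab
  exact (p.takeUntil a ha).reachable.symm.trans (p.takeUntil b hb).reachable

theorem SimpleGraph.Walk.IsPath.length_le_two_of_rainbow {c : Sym2 V → β}
    (hc : ∀ ⦃a b x d⦄, G.Adj a b → G.Adj b x → G.Adj x d →
      [c s(a, b), c s(b, x), c s(x, d)].Nodup → a = d)
    {u v : V} {p : G.Walk u v} (hp : p.IsPath) (hrb : (p.edges.map c).Nodup) :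
    p.length ≤ 2 := by
  match p, hp, hrb with
  | .nil, _, _ | .cons _ .nil, _, _ | .cons _ (.cons _ .nil), _, _ => simp
  | .cons h₁ (.cons h₂ (.cons h₃ q)), hp, hrb =>
    have hu : u ∉ (Walk.cons h₂ (.cons h₃ q)).support := ((Walk.cons_isPath_iff _ _).1 hp).2
    exact absurd (hc h₁ h₂ h₃ (hrb.sublist (by simp))) (by rintro rfl; simp at hu)

theorem IsProperEdgeColoring.comap {c : Sym2 W → β} (hc : IsProperEdgeColoring H c)
    (φ : G →g H) (hφ : ∀ ⦃a b⦄, G.Reachable a b → φ a = φ b → a = b) :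
    IsProperEdgeColoring G (c ∘ Sym2.map φ) := by
  rintro e₁ e₂ he₁ he₂ hne ⟨v, hv₁, hv₂⟩
  obtain ⟨a, rfl⟩ := Sym2.mem_iff_exists.1 hv₁
  obtain ⟨b, rfl⟩ := Sym2.mem_iff_exists.1 hv₂
  rw [mem_edgeSet] at he₁ he₂
  have hab : φ a ≠ φ b := fun h =>
    hne (Sym2.congr_right.2 (hφ (he₁.symm.reachable.trans he₂.reachable) h))
  exact hc (φ.map_adj he₁) (φ.map_adj he₂) (mt Sym2.congr_right.1 hab) ⟨φ v, by simp, by simp⟩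

theorem IsProperEdgeColoring.comp {c : Sym2 V → β} (hc : IsProperEdgeColoring G c)
    {κ : β → γ} (hκ : Function.Injective κ) : IsProperEdgeColoring G (κ ∘ c) :=
  fun _ _ he₁ he₂ hne hv => hκ.ne (hc he₁ he₂ hne hv)

theorem IsProperEdgeColoring.exists_rainbow_path_length_two {c : Sym2 V → β}
    (hc : IsProperEdgeColoring G c) {v : V} (hv : 1 < (G.neighborSet v).ncard) :
    ∃ (a b : V) (p : G.Walk a b), p.IsPath ∧ (p.edges.map c).Nodup ∧ p.length = 2 := by
  obtain ⟨a, ha, b, hb, hab⟩ := (Set.one_lt_ncard_iff_nontrivial_and_finite.1 hv).1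
  rw [mem_neighborSet] at ha hb
  refine ⟨a, b, .cons ha.symm (.cons hb .nil), ?_, ?_, rfl⟩
  · simp [Walk.cons_isPath_iff, hab, ha.ne', hb.ne]
  · simpa using hc (G.mem_edgeSet.2 ha.symm) (G.mem_edgeSet.2 hb) (by simp [hab, ha.ne'])
      ⟨v, by simp⟩

/-- `a xor b` is the sum in `𝔽₂²`; it lies in `{1, 2, 3}` when `a ≠ b`, where `% 3` is injective. -/
def k4Coloring : Sym2 (Fin 4) → Fin 3 :=
  Sym2.lift ⟨fun a b => ⟨((a : ℕ) ^^^ b) % 3, Nat.mod_lt _ three_pos⟩,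
    fun a b => by simp only [Nat.xor_comm]⟩

theorem k4Coloring_isProperEdgeColoring : IsProperEdgeColoring ⊤ k4Coloring := by
  simp only [IsProperEdgeColoring, edgeSet_top]
  decide

theorem k4Coloring_eq_of_rainbow : ∀ ⦃a b x d : Fin 4⦄, (⊤ : SimpleGraph (Fin 4)).Adj a b →
    (⊤ : SimpleGraph (Fin 4)).Adj b x → (⊤ : SimpleGraph (Fin 4)).Adj x d →
    [k4Coloring s(a, b), k4Coloring s(b, x), k4Coloring s(x, d)].Nodup → a = d := by
  simp only [top_adj]
  decide

theorem k4Coloring_rainbow_length_le_two {u v : Fin 4} {p : (⊤ : SimpleGraph (Fin 4)).Walk u v}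
    (hp : p.IsPath) (hrb : (p.edges.map k4Coloring).Nodup) : p.length ≤ 2 :=
  hp.length_le_two_of_rainbow k4Coloring_eq_of_rainbow hrb

def disjointUnionK4 (r : ℕ) : SimpleGraph (Fin (4 * r)) where
  Adj a b := a ≠ b ∧ (a : ℕ) / 4 = b / 4
  symm := ⟨fun _ _ h => ⟨h.1.symm, h.2.symm⟩⟩
  loopless := ⟨fun _ h => h.1 rfl⟩

namespace disjointUnionK4

variable {r : ℕ}

@[simp]
theorem adj_iff {a b : Fin (4 * r)} :
    (disjointUnionK4 r).Adj a b ↔ a ≠ b ∧ (a : ℕ) / 4 = b / 4 :=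
  Iff.rfl

theorem div_four_eq_of_reachable {a b : Fin (4 * r)} (h : (disjointUnionK4 r).Reachable a b) :
    (a : ℕ) / 4 = b / 4 := by
  obtain ⟨p⟩ := h
  induction p with
  | nil => rfl
  | cons hadj _ ih => exact (adj_iff.1 hadj).2.trans ih

def toK4 (r : ℕ) : disjointUnionK4 r →g (⊤ : SimpleGraph (Fin 4)) where
  toFun v := ⟨v % 4, Nat.mod_lt _ four_pos⟩
  map_rel' {a b} h := by
    obtain ⟨hne, hdiv⟩ := adj_iff.1 h
    simp only [top_adj, ne_eq, Fin.ext_iff] at hne ⊢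
    omega

theorem toK4_injective_of_reachable {a b : Fin (4 * r)} (h : (disjointUnionK4 r).Reachable a b)
    (hab : toK4 r a = toK4 r b) : a = b := by
  have hdiv := div_four_eq_of_reachable h
  simp only [toK4, RelHom.coeFn_mk, Fin.ext_iff] at hab ⊢
  omega

theorem image_toK4_neighborSet (v : Fin (4 * r)) :
    toK4 r '' (disjointUnionK4 r).neighborSet v = {toK4 r v}ᶜ := by
  ext j
  constructor
  · rintro ⟨w, hw, rfl⟩
    exact ((toK4 r).map_adj hw).ne'
  · intro hj
    have hjv : (j : ℕ) ≠ v % 4 := fun h => hj (Fin.ext h)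
    refine ⟨⟨4 * (v / 4) + j, by omega⟩, ?_, Fin.ext ?_⟩
    · simp only [mem_neighborSet, adj_iff, ne_eq, Fin.ext_iff]
      omega
    · simp only [toK4, RelHom.coeFn_mk]
      omega

theorem ncard_neighborSet (v : Fin (4 * r)) : ((disjointUnionK4 r).neighborSet v).ncard = 3 := by
  have hinj : Set.InjOn (toK4 r) ((disjointUnionK4 r).neighborSet v) := fun a ha b hb =>
    toK4_injective_of_reachable (Adj.reachable ha |>.symm.trans hb.reachable)
  rw [← hinj.ncard_image, image_toK4_neighborSet, Set.ncard_compl]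
  simp

def edgeColoring (r : ℕ) (e : Sym2 (Fin (4 * r))) : ℕ :=
  k4Coloring (e.map (toK4 r))

theorem isProperEdgeColoring_edgeColoring :
    IsProperEdgeColoring (disjointUnionK4 r) (edgeColoring r) :=
  (k4Coloring_isProperEdgeColoring.comap (toK4 r) fun _ _ => toK4_injective_of_reachable).comp
    Fin.val_injective

theorem rainbow_length_le_two {u v : Fin (4 * r)} {p : (disjointUnionK4 r).Walk u v}
    (hp : p.IsPath) (hrb : (p.edges.map (edgeColoring r)).Nodup) : p.length ≤ 2 := by
  rw [← Walk.length_map (toK4 r)]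
  refine k4Coloring_rainbow_length_le_two
    (hp.map_of_injective_of_reachable _ fun _ _ => toK4_injective_of_reachable) ?_
  rw [Walk.edges_map, List.map_map]
  refine List.Nodup.of_map Fin.val ?_
  rwa [List.map_map]

end disjointUnionK4

/-- There is a proper `3`-edge-coloring of `K_4` with no rainbow path of `3` edges;
consequently, for every `r ≥ 1` there is a `3`-regular graph (a disjoint union of `r`
copies of `K_4`) with a proper edge-coloring whose longest rainbow path has exactly
`2` edges, so the constant `2/3` in the rainbow path theorem is best possible. -/
theorem K4_no_rainbow_P3 :
    (∃ c : Sym2 (Fin 4) → Fin 3,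
      IsProperEdgeColoring (⊤ : SimpleGraph (Fin 4)) c ∧
      ∀ (u v : Fin 4) (p : (⊤ : SimpleGraph (Fin 4)).Walk u v),
        p.IsPath → p.length = 3 → ¬ (p.edges.map c).Nodup) ∧
    ∀ r : ℕ, 1 ≤ r →
      ∃ (G : SimpleGraph (Fin (4 * r))) (c : Sym2 (Fin (4 * r)) → ℕ),
        (∀ v, (G.neighborSet v).ncard = 3) ∧ IsProperEdgeColoring G c ∧
        (∀ (u v : Fin (4 * r)) (p : G.Walk u v),
          p.IsPath → (p.edges.map c).Nodup → p.length ≤ 2) ∧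
        (∃ (u v : Fin (4 * r)) (p : G.Walk u v),
          p.IsPath ∧ (p.edges.map c).Nodup ∧ p.length = 2) := by
  refine ⟨⟨k4Coloring, k4Coloring_isProperEdgeColoring, fun u v p hp hlen hrb => ?_⟩,
    fun r hr => ?_⟩
  · have := k4Coloring_rainbow_length_le_two hp hrb
    omega
  · open disjointUnionK4 in
    exact ⟨disjointUnionK4 r, edgeColoring r, ncard_neighborSet, isProperEdgeColoring_edgeColoring,
      fun _ _ _ => rainbow_length_le_two,
      isProperEdgeColoring_edgeColoring.exists_rainbow_path_length_two (v := ⟨0, by omega⟩)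
        (by rw [ncard_neighborSet]; norm_num)⟩
end

section
/- Every graph on n vertices with more than (3/2)·n edges, equipped with any proper edge-coloring, contains a rainbow path with 3 edges. -/
/-!
Suppose the coloring has no rainbow path with three edges. Then every path `a b x y` has
`c(ab) = c(xy)`, because the two pairs of consecutive edges already differ by properness.
Comparing two such paths through a vertex `u` of degree at least `3` shows that no neighbour of
a neighbour of `u` lies outside the closed neighbourhood `N[u]`, so `N[u]` is the whole
component of `u`. If `deg u = 3`, this component has four vertices, so no degree in it exceeds
`3`. If `deg u ≥ 4`, every neighbour of `u` has degree at most `2`, so the degrees in `N[u]`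
add up to at most `3 deg u`. Hence every component has average degree at most `3`, and
`2|E| ≤ 3n`.
-/

open SimpleGraph Finset

namespace SimpleGraph

theorem edgeSet_pathGraph_four :
    (pathGraph 4).edgeSet = {s(0, 1), s(1, 2), s(2, 3)} := by
  ext e
  induction e with
  | _ i j =>
    rw [mem_edgeSet, pathGraph_adj]
    fin_cases i <;> fin_cases j <;> simp

theorem exists_adj_notMem_of_card_lt_degree {V : Type*} {G : SimpleGraph V} [Fintype V]
    [DecidableEq V] [DecidableRel G.Adj] {u : V} {s : Finset V} (h : #s < G.degree u) :
    ∃ x, G.Adj u x ∧ x ∉ s := by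
  obtain ⟨x, hx, hxs⟩ :=
    exists_mem_notMem_of_card_lt_card (h.trans_eq (G.card_neighborFinset_eq_degree u).symm)
  exact ⟨x, (G.mem_neighborFinset u x).mp hx, hxs⟩

end SimpleGraph

namespace IsProperEdgeColoring

variable {V β : Type*} {G : SimpleGraph V} {c : Sym2 V → β}

theorem ne_of_adj_of_adj (hc : IsProperEdgeColoring G c) {a b x : V} (hab : G.Adj a b)
    (hbx : G.Adj b x) (hax : a ≠ x) : c s(a, b) ≠ c s(b, x) :=
  hc hab hbx (by simp [hax, hab.ne]) ⟨b, by simp, by simp⟩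

theorem hasRainbowCopy_pathGraph_four (hc : IsProperEdgeColoring G c) {a b x y : V}
    (hab : G.Adj a b) (hbx : G.Adj b x) (hxy : G.Adj x y) (hax : a ≠ x) (hay : a ≠ y)
    (hby : b ≠ y) (hcol : c s(a, b) ≠ c s(x, y)) : HasRainbowCopy (pathGraph 4) G c := by
  have := hab.ne; have := hbx.ne; have := hxy.ne
  refine ⟨⟨![a, b, x, y], fun i j hij => ?_⟩, fun i j hij => ?_, fun e₁ he₁ e₂ he₂ h => ?_⟩
  · fin_cases i <;> fin_cases j <;> simp_all [eq_comm]
  · change G.Adj (![a, b, x, y] i) (![a, b, x, y] j)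
    rw [pathGraph_adj] at hij
    fin_cases i <;> fin_cases j <;> simp_all [G.adj_comm]
  · rw [edgeSet_pathGraph_four] at he₁ he₂
    simp only [Set.mem_insert_iff, Set.mem_singleton_iff] at he₁ he₂
    rcases he₁ with rfl | rfl | rfl <;> rcases he₂ with rfl | rfl | rfl <;>
      first
      | rfl
      | exact absurd h (hc.ne_of_adj_of_adj hab hbx hax)
      | exact absurd h.symm (hc.ne_of_adj_of_adj hab hbx hax)
      | exact absurd h (hc.ne_of_adj_of_adj hbx hxy hby)
      | exact absurd h.symm (hc.ne_of_adj_of_adj hbx hxy hby)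
      | exact absurd h hcol
      | exact absurd h.symm hcol

theorem color_eq_of_not_hasRainbowCopy (hc : IsProperEdgeColoring G c)
    (hno : ¬ HasRainbowCopy (pathGraph 4) G c) {a b x y : V} (hab : G.Adj a b) (hbx : G.Adj b x)
    (hxy : G.Adj x y) (hax : a ≠ x) (hay : a ≠ y) (hby : b ≠ y) : c s(a, b) = c s(x, y) :=
  not_not.mp fun hcol => hno (hc.hasRainbowCopy_pathGraph_four hab hbx hxy hax hay hby hcol)

variable [Fintype V] [DecidableEq V] [DecidableRel G.Adj]
  (hc : IsProperEdgeColoring G c) (hno : ¬ HasRainbowCopy (pathGraph 4) G c)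
include hc hno

theorem neighborFinset_subset_insert_neighborFinset_of_adj {u v : V} (hu : 3 ≤ G.degree u)
    (huv : G.Adj u v) : G.neighborFinset v ⊆ insert u (G.neighborFinset u) := by
  intro y hy
  rw [mem_neighborFinset] at hy
  rw [mem_insert, mem_neighborFinset]
  by_contra! hyu
  obtain ⟨x₁, hux₁, hx₁⟩ :=
    G.exists_adj_notMem_of_card_lt_degree (u := u) (s := {v}) (by simp; omega)
  obtain ⟨x₂, hux₂, hx₂⟩ :=
    G.exists_adj_notMem_of_card_lt_degree (s := {v, x₁}) (card_le_two.trans_lt hu)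
  simp only [mem_insert, mem_singleton, not_or] at hx₁ hx₂
  have hyx : ∀ {x}, G.Adj u x → y ≠ x := fun hux hyx => hyu.2 (hyx ▸ hux)
  have h₁ := hc.color_eq_of_not_hasRainbowCopy hno hy.symm huv.symm hux₁ hyu.1 (hyx hux₁)
    (Ne.symm hx₁)
  have h₂ := hc.color_eq_of_not_hasRainbowCopy hno hy.symm huv.symm hux₂ hyu.1 (hyx hux₂)
    (Ne.symm hx₂.1)
  exact hc.ne_of_adj_of_adj hux₁.symm hux₂ (Ne.symm hx₂.2) (by rw [Sym2.eq_swap, ← h₁, h₂])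

theorem degree_le_two_of_four_le_degree {u v : V} (hu : 4 ≤ G.degree u) (huv : G.Adj u v) :
    G.degree v ≤ 2 := by
  by_contra! hv
  obtain ⟨y, hvy, hy⟩ :=
    G.exists_adj_notMem_of_card_lt_degree (u := v) (s := {u}) (by simp; omega)
  obtain ⟨z, hvz, hz⟩ :=
    G.exists_adj_notMem_of_card_lt_degree (s := {u, y}) (card_le_two.trans_lt hv)
  simp only [mem_insert, mem_singleton, not_or] at hy hz
  have hN := neighborFinset_subset_insert_neighborFinset_of_adj hc hno (by omega) huv
  have huy : G.Adj u y := by simpa [hy] using hN ((G.mem_neighborFinset v y).mpr hvy)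
  have huz : G.Adj u z := by simpa [hz.1] using hN ((G.mem_neighborFinset v z).mpr hvz)
  obtain ⟨w, huw, hw⟩ :=
    G.exists_adj_notMem_of_card_lt_degree (s := {v, y, z}) (card_le_three.trans_lt hu)
  simp only [mem_insert, mem_singleton, not_or] at hw
  have h₁ := hc.color_eq_of_not_hasRainbowCopy hno huw.symm huy hvy.symm hw.2.1 hw.1 huv.ne
  have h₂ := hc.color_eq_of_not_hasRainbowCopy hno huz hvz.symm hvy huv.ne (Ne.symm hy) hz.2
  exact hc.ne_of_adj_of_adj huw.symm huz hw.2.2 (by rw [h₁, h₂, Sym2.eq_swap])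

theorem neighborFinset_subset_insert_neighborFinset_of_mem {u w : V} (hu : 3 ≤ G.degree u)
    (hw : w ∈ insert u (G.neighborFinset u)) :
    G.neighborFinset w ⊆ insert u (G.neighborFinset u) := by
  rcases mem_insert.mp hw with rfl | hw
  · exact subset_insert _ _
  · exact neighborFinset_subset_insert_neighborFinset_of_adj hc hno hu
      ((G.mem_neighborFinset _ _).mp hw)

theorem degree_le_of_mem_insert_neighborFinset {u w : V} (hu : 3 ≤ G.degree u)
    (hw : w ∈ insert u (G.neighborFinset u)) : G.degree w ≤ G.degree u := by
  have hsub : G.neighborFinset w ⊆ (insert u (G.neighborFinset u)).erase w := fun x hx =>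
    mem_erase.mpr ⟨((G.mem_neighborFinset _ _).mp hx).ne',
      neighborFinset_subset_insert_neighborFinset_of_mem hc hno hu hw hx⟩
  simpa [card_erase_of_mem hw] using card_le_card hsub

theorem mem_insert_neighborFinset_of_reachable {u w : V} (hu : 3 ≤ G.degree u)
    (h : G.Reachable u w) : w ∈ insert u (G.neighborFinset u) := by
  rw [reachable_iff_reflTransGen] at h
  induction h with
  | refl => exact mem_insert_self _ _
  | tail _ hadj ih =>
    exact neighborFinset_subset_insert_neighborFinset_of_mem hc hno hu ih
      ((G.mem_neighborFinset _ _).mpr hadj)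

theorem sum_degrees_insert_neighborFinset_le {u : V} (hu : 3 ≤ G.degree u) :
    ∑ w ∈ insert u (G.neighborFinset u), G.degree w ≤ 3 * #(insert u (G.neighborFinset u)) := by
  rcases (show G.degree u = 3 ∨ 4 ≤ G.degree u by omega) with hu3 | hu4
  · rw [mul_comm, ← smul_eq_mul]
    exact sum_le_card_nsmul _ _ _ fun w hw =>
      hu3 ▸ degree_le_of_mem_insert_neighborFinset hc hno hu hw
  · have hnbr : ∑ w ∈ G.neighborFinset u, G.degree w ≤ #(G.neighborFinset u) • 2 :=
      sum_le_card_nsmul _ _ _ fun w hw =>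
        degree_le_two_of_four_le_degree hc hno hu4 ((G.mem_neighborFinset _ _).mp hw)
    rw [smul_eq_mul, card_neighborFinset_eq_degree] at hnbr
    rw [sum_insert (notMem_neighborFinset_self G u),
      card_insert_of_notMem (notMem_neighborFinset_self G u), card_neighborFinset_eq_degree]
    omega

theorem sum_degrees_connectedComponent_le [DecidableEq G.ConnectedComponent]
    (K : G.ConnectedComponent) :
    ∑ v with G.connectedComponentMk v = K, G.degree v ≤
      3 * #{v | G.connectedComponentMk v = K} := by
  by_cases hK : ∃ u, G.connectedComponentMk u = K ∧ 3 ≤ G.degree u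
  · obtain ⟨u, rfl, hu⟩ := hK
    have hfiber : ({v | G.connectedComponentMk v = G.connectedComponentMk u} : Finset V) =
        insert u (G.neighborFinset u) := by
      ext v
      simp only [mem_filter, mem_univ, true_and, ConnectedComponent.eq]
      refine ⟨fun h => mem_insert_neighborFinset_of_reachable hc hno hu h.symm, fun h => ?_⟩
      rcases mem_insert.mp h with rfl | h
      · rfl
      · exact ((G.mem_neighborFinset _ _).mp h).reachable.symm
    rw [hfiber]
    exact sum_degrees_insert_neighborFinset_le hc hno hu
  · push Not at hK
    rw [mul_comm, ← smul_eq_mul]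
    exact sum_le_card_nsmul _ _ _ fun v hv => (hK v (mem_filter.mp hv).2).le

theorem sum_degrees_le_three_mul_card [DecidableEq G.ConnectedComponent] :
    ∑ v, G.degree v ≤ 3 * Fintype.card V :=
  calc ∑ v, G.degree v
      = ∑ K : G.ConnectedComponent, ∑ v with G.connectedComponentMk v = K, G.degree v :=
        (sum_fiberwise _ _ _).symm
    _ ≤ ∑ K : G.ConnectedComponent, 3 * #{v | G.connectedComponentMk v = K} :=
        sum_le_sum fun K _ => sum_degrees_connectedComponent_le hc hno K
    _ = 3 * Fintype.card V := by
        rw [← mul_sum, ← card_eq_sum_card_fiberwise fun _ _ => mem_univ _, card_univ]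

end IsProperEdgeColoring

/-- Every properly edge-colored graph on `n` vertices with more than `(3/2)n` edges
contains a rainbow path with `3` edges. -/
theorem rainbow_P3_of_many_edges {n : ℕ} (G : SimpleGraph (Fin n))
    (h : 3 * n < 2 * G.edgeSet.ncard) {β : Type*} (c : Sym2 (Fin n) → β)
    (hc : IsProperEdgeColoring G c) :
    HasRainbowCopy (pathGraph 4) G c := by
  classical
  by_contra hno
  have hdeg := hc.sum_degrees_le_three_mul_card hno
  rw [G.sum_degrees_eq_twice_card_edges, Fintype.card_fin] at hdeg
  rw [← G.coe_edgeFinset, Set.ncard_coe_finset] at h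
  omega
end

section
/- Every proper edge-coloring of the complete graph K_5 on five vertices contains a rainbow path with 4 edges. -/
open SimpleGraph Finset

/-! In a path `v₀v₁v₂v₃v₄` properness already separates the colours of consecutive edges, so the
path is rainbow as soon as its three pairs of disjoint edges get distinct colours. Start from
disjoint edges `v₀v₁`, `v₃v₄` of distinct colours (if `01` and `34` share a colour, then `02` and
`34` cannot) and let `v₂` be the fifth vertex. At most one of the two edges from `v₂` to
`{v₀, v₁}` has the colour of `v₃v₄`, and at most one edge from `v₂` to `{v₃, v₄}` has the colour
of `v₀v₁`; orienting the two end edges so as to avoid these gives a rainbow path. -/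

section

variable {V β : Type*} {c : Sym2 V → β}

theorem IsProperEdgeColoring.top_ne (hc : IsProperEdgeColoring (⊤ : SimpleGraph V) c)
    {x a b : V} (hxa : x ≠ a) (hxb : x ≠ b) (hab : a ≠ b) : c s(x, a) ≠ c s(x, b) :=
  hc (by simpa using hxa) (by simpa using hxb) (Sym2.congr_right.not.2 hab)
    ⟨x, Sym2.mem_mk_left x a, Sym2.mem_mk_left x b⟩

theorem IsProperEdgeColoring.top_ne_or_ne (hc : IsProperEdgeColoring (⊤ : SimpleGraph V) c)
    {x a b : V} (hxa : x ≠ a) (hxb : x ≠ b) (hab : a ≠ b) (γ : β) :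
    c s(x, a) ≠ γ ∨ c s(x, b) ≠ γ := by
  by_contra! h
  exact hc.top_ne hxa hxb hab (h.1.trans h.2.symm)

theorem hasRainbowCopy_of_forall_disjoint {α : Type*} {F : SimpleGraph α} {G : SimpleGraph V}
    (hc : IsProperEdgeColoring G c) (f : α ↪ V) (hf : ∀ ⦃a b⦄, F.Adj a b → G.Adj (f a) (f b))
    (hdisj : ∀ e₁ ∈ F.edgeSet, ∀ e₂ ∈ F.edgeSet, (∀ v ∈ e₁, v ∉ e₂) →
      c (e₁.map f) ≠ c (e₂.map f)) :
    HasRainbowCopy F G c := by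
  let φ : F →g G := ⟨f, @hf⟩
  refine ⟨f, hf, fun e₁ h₁ e₂ h₂ heq => ?_⟩
  by_contra hne
  by_cases hshare : ∃ v ∈ e₁, v ∈ e₂
  · obtain ⟨v, hv₁, hv₂⟩ := hshare
    exact hc (φ.map_mem_edgeSet h₁) (φ.map_mem_edgeSet h₂)
      ((Sym2.map.injective f.injective).ne hne)
      ⟨f v, Sym2.mem_map.2 ⟨v, hv₁, rfl⟩, Sym2.mem_map.2 ⟨v, hv₂, rfl⟩⟩ heq
  · push Not at hshare
    exact hdisj e₁ h₁ e₂ h₂ hshare heq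

theorem pathGraph_five_edge_cases :
    ∀ e ∈ (pathGraph 5).edgeSet, e = s(0, 1) ∨ e = s(1, 2) ∨ e = s(2, 3) ∨ e = s(3, 4) := by
  intro e
  induction e using Sym2.ind with
  | _ u v =>
    rw [mem_edgeSet, pathGraph_adj]
    revert u v
    decide

theorem hasRainbowCopy_pathGraph_five (hc : IsProperEdgeColoring (⊤ : SimpleGraph V) c)
    (f : Fin 5 ↪ V) (h₀₂ : c s(f 0, f 1) ≠ c s(f 2, f 3)) (h₁₃ : c s(f 1, f 2) ≠ c s(f 3, f 4))
    (h₀₃ : c s(f 0, f 1) ≠ c s(f 3, f 4)) : HasRainbowCopy (pathGraph 5) ⊤ c := by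
  refine hasRainbowCopy_of_forall_disjoint hc f (fun a b hab => f.injective.ne hab.ne) ?_
  intro e₁ h₁ e₂ h₂ hdisj
  rcases pathGraph_five_edge_cases e₁ h₁ with rfl | rfl | rfl | rfl <;>
  rcases pathGraph_five_edge_cases e₂ h₂ with rfl | rfl | rfl | rfl <;>
  simp only [Sym2.map_mk] <;>
  first
  | exact absurd hdisj (by decide)
  | assumption
  | exact Ne.symm ‹_›

theorem hasRainbowCopy_pathGraph_five_of_ne_of_ne
    (hc : IsProperEdgeColoring (⊤ : SimpleGraph V) c) (f : Fin 5 ↪ V)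
    (h₀₂ : c s(f 0, f 1) ≠ c s(f 2, f 3)) (h₀₃ : c s(f 0, f 1) ≠ c s(f 3, f 4)) :
    HasRainbowCopy (pathGraph 5) ⊤ c := by
  rcases hc.top_ne_or_ne (f.injective.ne (by decide : (2 : Fin 5) ≠ 1))
      (f.injective.ne (by decide : (2 : Fin 5) ≠ 0)) (f.injective.ne (by decide : (1 : Fin 5) ≠ 0))
      (c s(f 3, f 4)) with h | h
  · exact hasRainbowCopy_pathGraph_five hc f h₀₂ (by rwa [Sym2.eq_swap]) h₀₃
  · refine hasRainbowCopy_pathGraph_five hc ((Equiv.swap 0 1).toEmbedding.trans f) ?_ ?_ ?_ <;>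
      simp only [Function.Embedding.trans_apply, Equiv.coe_toEmbedding, Equiv.swap_apply_left,
        Equiv.swap_apply_right, Equiv.swap_apply_of_ne_of_ne, ne_eq, Fin.reduceEq,
        not_false_eq_true, Sym2.eq_swap (a := f 1)]
    exacts [h₀₂, by rwa [Sym2.eq_swap], h₀₃]

theorem hasRainbowCopy_pathGraph_five_of_ne (hc : IsProperEdgeColoring (⊤ : SimpleGraph V) c)
    (f : Fin 5 ↪ V) (h₀₃ : c s(f 0, f 1) ≠ c s(f 3, f 4)) :
    HasRainbowCopy (pathGraph 5) ⊤ c := by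
  rcases hc.top_ne_or_ne (f.injective.ne (by decide : (2 : Fin 5) ≠ 3))
      (f.injective.ne (by decide : (2 : Fin 5) ≠ 4)) (f.injective.ne (by decide : (3 : Fin 5) ≠ 4))
      (c s(f 0, f 1)) with h | h
  · exact hasRainbowCopy_pathGraph_five_of_ne_of_ne hc f h.symm h₀₃
  · refine hasRainbowCopy_pathGraph_five_of_ne_of_ne hc
      ((Equiv.swap 3 4).toEmbedding.trans f) ?_ ?_ <;>
      simp only [Function.Embedding.trans_apply, Equiv.coe_toEmbedding, Equiv.swap_apply_left,
        Equiv.swap_apply_right, Equiv.swap_apply_of_ne_of_ne, ne_eq, Fin.reduceEq,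
        not_false_eq_true]
    exacts [h.symm, by rwa [Sym2.eq_swap (a := f 4)]]

end

/-- Every proper edge-coloring of `K_5` contains a rainbow path with `4` edges. -/
theorem K5_rainbow_P4 {β : Type*} (c : Sym2 (Fin 5) → β)
    (hc : IsProperEdgeColoring (⊤ : SimpleGraph (Fin 5)) c) :
    HasRainbowCopy (pathGraph 5) (⊤ : SimpleGraph (Fin 5)) c := by
  by_cases h : c s(0, 1) = c s(3, 4)
  · have h₀₂ : c s(0, 2) ≠ c s(3, 4) := h ▸ (hc.top_ne (by decide) (by decide) (by decide)).symm
    exact hasRainbowCopy_pathGraph_five_of_ne hc (Equiv.swap 1 2).toEmbedding h₀₂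
  · exact hasRainbowCopy_pathGraph_five_of_ne hc (Function.Embedding.refl _) h
end
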